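/- arXiv:2107.00137 — 4 statements merged into one kernel-verified Lean document; each statement's English description precedes it below -/
import Mathlib

section
/- For all integers n, k with 1 ≤ k ≤ n, the ψ-binomial coefficients satisfy the symmetric Fontané recurrence binomψ(n+1, k) = binomψ(n, k) + F(n+1, n−k+1) · binomψ(n, k−1). -/
open Finset

/-- The ψ-factorial: ψₙ! = ψ₁ψ₂⋯ψₙ, with ψ₀! = 1. -/
noncomputable def psiFact (ψ : ℕ → ℂ) : ℕ → ℂ
  | 0 => 1
  | n + 1 => psiFact ψ n * ψ (n + 1)

/-- The ψ-binomial coefficient binomψ(n,k) = ψₙ!/(ψₖ!·ψ_{n−k}!). -/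
noncomputable def psiBinom (ψ : ℕ → ℂ) (n k : ℕ) : ℂ :=
  psiFact ψ n / (psiFact ψ k * psiFact ψ (n - k))

/-- The Fontané numbers F(n,k) = (ψₙ − ψₖ)/ψ_{n−k}. -/
noncomputable def Fker (ψ : ℕ → ℂ) (n k : ℕ) : ℂ :=
  (ψ n - ψ k) / ψ (n - k)

lemma fontane_key (a b c d e f g : ℂ) (hd : d ≠ 0) (he : e ≠ 0) (hf : f ≠ 0) (hg : g ≠ 0) :
    a * b * c / (d * e * (f * g))
      = a * b / (d * e * f) + (c - g) / e * (a * b / (d * (f * g))) := by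
  rw [div_mul_div_comm,
    div_add_div _ _ (by simp [hd, he, hf]) (by simp [hd, he, hf, hg]),
    div_eq_div_iff (by simp [hd, he, hf, hg]) (by simp [hd, he, hf, hg])]
  ring

lemma psiFact_ne_zero (ψ : ℕ → ℂ) (hψ : ∀ n : ℕ, 1 ≤ n → ψ n ≠ 0) :
    ∀ n, psiFact ψ n ≠ 0 := by
  intro n
  induction n with
  | zero => simp [psiFact]
  | succ m ih => exact mul_ne_zero ih (hψ (m + 1) (Nat.le_add_left 1 m))

/-- The symmetric version of Fontané's recurrence for the ψ-binomial coefficients. -/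
theorem fontane_recurrence_symm (ψ : ℕ → ℂ) (hψ0 : ψ 0 = 0) (hψ1 : ψ 1 = 1) (hψ : ∀ n : ℕ, 1 ≤ n → ψ n ≠ 0)
    (n k : ℕ) (hk1 : 1 ≤ k) (hkn : k ≤ n) :
    psiBinom ψ (n + 1) k
      = psiBinom ψ n k + Fker ψ (n + 1) (n - k + 1) * psiBinom ψ n (k - 1) := by
  obtain ⟨j, rfl⟩ : ∃ j, k = j + 1 := ⟨k - 1, (Nat.succ_pred_eq_of_pos hk1).symm⟩
  obtain ⟨m, rfl⟩ : ∃ m, n = j + 1 + m := ⟨n - (j + 1), (Nat.add_sub_cancel' hkn).symm⟩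
  have h1 : j + 1 + m + 1 - (j + 1) = m + 1 := by omega
  have h2 : j + 1 + m - (j + 1) = m := by omega
  have h3 : j + 1 + m - (j + 1) + 1 = m + 1 := by omega
  have h4 : j + 1 - 1 = j := by omega
  have h5 : j + 1 + m - j = m + 1 := by omega
  have h6 : j + 1 + m + 1 - (m + 1) = j + 1 := by omega
  simp only [psiBinom, Fker, h1, h2, h3, h4, h5, h6]
  have hfj := psiFact_ne_zero ψ hψ j
  have hfm := psiFact_ne_zero ψ hψ m
  have hj1 := hψ (j + 1) (by omega)
  have hm1 := hψ (m + 1) (by omega)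
  have hn1 := hψ (j + 1 + m + 1) (by omega)
  have e1 : psiFact ψ (j + 1 + m + 1) = psiFact ψ (j + m) * ψ (j + m + 1) * ψ (j + m + 2) := by
    rw [show j + 1 + m + 1 = (j + m + 1) + 1 from by omega]
    rw [psiFact, psiFact]
  have e2 : psiFact ψ (j + 1 + m) = psiFact ψ (j + m) * ψ (j + m + 1) := by
    rw [show j + 1 + m = (j + m) + 1 from by omega, psiFact]
  have e3 : psiFact ψ (j + 1) = psiFact ψ j * ψ (j + 1) := rfl
  have e4 : psiFact ψ (m + 1) = psiFact ψ m * ψ (m + 1) := rfl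
  have e5 : ψ (j + 1 + m + 1) = ψ (j + m + 2) := by congr 1; omega
  rw [e1, e2, e3, e4, e5]
  exact fontane_key _ _ _ _ _ _ _ hfj hj1 hfm hm1
end

section
/- Let q ∈ ℂ with q ≠ 0 and qⁿ ≠ 1 for all n ≥ 1, and let ψₙ = (qⁿ − 1)/(q − 1). Then for all i > j ≥ 0 the Fontané product satisfies (a ∗_{i,j} b)ₙ = q^j Σ_{k=0}^{n} q^k binomψ(n,k) aₖ b_{n−k} for all coefficient sequences a, b (i.e., a ∗_{i,j} b corresponds to q^j f(qx)g(x), independently of i), and the operation ∗_{i,j} is neither commutative nor associative: there exist coefficient sequences a, b, c with a ∗_{i,j} b ≠ b ∗_{i,j} a and (a ∗_{i,j} b) ∗_{i,j} c ≠ a ∗_{i,j} (b ∗_{i,j} c). -/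
open Finset

/-- The q-integers [n] = (qⁿ − 1)/(q − 1). -/
noncomputable def qInt (q : ℂ) (n : ℕ) : ℂ := (q ^ n - 1) / (q - 1)

/-- The Fontané product ∗_{i,j} of coefficient sequences. -/
noncomputable def fontane (ψ : ℕ → ℂ) (i j : ℕ) (a b : ℕ → ℂ) (n : ℕ) : ℂ :=
  ∑ k ∈ Finset.range (n + 1), Fker ψ (n + i) (k + j) * psiBinom ψ n k * a k * b (n - k)

/- In the q-case every Fontané number with k < n collapses to a power of q, since
qⁿ − qᵏ = qᵏ(qⁿ⁻ᵏ − 1): F(n, k) = qᵏ. Hence a ∗_{i,j} b is the q-twisted product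
q^j f(qx)g(x), whatever i is. Its coefficients of degree 0 and 1 already separate
a ∗ b from b ∗ a and (a ∗ b) ∗ c from a ∗ (b ∗ c) for a = x, b = c = 1. -/

lemma qInt_one {q : ℂ} (hq : q ≠ 1) : qInt q 1 = 1 := by
  simp [qInt, sub_ne_zero.mpr hq]

lemma Fker_qInt {q : ℂ} {n k : ℕ} (h : q ^ (n - k) ≠ 1) : Fker (qInt q) n k = q ^ k := by
  have hkn : k ≤ n := by
    by_contra! hnk
    simp [Nat.sub_eq_zero_of_le hnk.le] at h
  have hq1 : q - 1 ≠ 0 := sub_ne_zero.mpr fun hq => h (by simp [hq])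
  have hpow : q ^ n = q ^ k * q ^ (n - k) := by rw [← pow_add, Nat.add_sub_cancel' hkn]
  rw [Fker, qInt, qInt, qInt, hpow, div_eq_iff (div_ne_zero (sub_ne_zero.mpr h) hq1)]
  field_simp
  ring

section qFontane

variable {q : ℂ} (hq : ∀ n : ℕ, 1 ≤ n → q ^ n ≠ 1) {i j : ℕ} (hij : j < i)
include hq hij

lemma fontane_qInt (a b : ℕ → ℂ) (n : ℕ) :
    fontane (qInt q) i j a b n
      = q ^ j * ∑ k ∈ range (n + 1), q ^ k * psiBinom (qInt q) n k * a k * b (n - k) := by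
  rw [fontane, mul_sum]
  refine sum_congr rfl fun k hk => ?_
  have hkn : k ≤ n := Nat.lt_succ_iff.mp (mem_range.mp hk)
  rw [Fker_qInt (hq _ (by omega)), pow_add]
  ring

lemma fontane_qInt_zero (a b : ℕ → ℂ) :
    fontane (qInt q) i j a b 0 = q ^ j * (a 0 * b 0) := by
  simp [fontane_qInt hq hij, psiBinom, psiFact]

lemma fontane_qInt_one (a b : ℕ → ℂ) :
    fontane (qInt q) i j a b 1 = q ^ j * (a 0 * b 1 + q * a 1 * b 0) := by
  have hψ1 : qInt q 1 = 1 := qInt_one (by simpa using hq 1 le_rfl)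
  simp [fontane_qInt hq hij, sum_range_succ, psiBinom, psiFact, hψ1]

end qFontane

/-- In the q-case the Fontané product ∗_{i,j} is q^j f(qx)g(x) (independently of i),
and it is neither commutative nor associative. -/
theorem qInt_fontane (q : ℂ) (hq0 : q ≠ 0) (hq : ∀ n : ℕ, 1 ≤ n → q ^ n ≠ 1)
    (i j : ℕ) (hij : j < i) :
    (∀ a b : ℕ → ℂ, ∀ n : ℕ,
      fontane (qInt q) i j a b n
        = q ^ j * ∑ k ∈ Finset.range (n + 1),
            q ^ k * psiBinom (qInt q) n k * a k * b (n - k)) ∧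
    (∃ a b : ℕ → ℂ, fontane (qInt q) i j a b ≠ fontane (qInt q) i j b a) ∧
    (∃ a b c : ℕ → ℂ,
      fontane (qInt q) i j (fontane (qInt q) i j a b) c
        ≠ fontane (qInt q) i j a (fontane (qInt q) i j b c)) := by
  have hq1 : q ≠ 1 := by simpa using hq 1 le_rfl
  have hqj : q ^ j ≠ 0 := pow_ne_zero j hq0
  let x : ℕ → ℂ := Pi.single 1 1
  let one : ℕ → ℂ := Pi.single 0 1
  refine ⟨fontane_qInt hq hij, ⟨x, one, fun h => hq1 ?_⟩, ⟨x, one, one, fun h => hq1 ?_⟩⟩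
  · simpa [x, one, fontane_qInt_one hq hij, hqj] using congrFun h 1
  · simpa [x, one, fontane_qInt_zero hq hij, fontane_qInt_one hq hij, hqj, hq0] using
      congrFun h 1
end

section
/- For all coefficient sequences a, b, the ψ-derivative of the Ward product satisfies the ψ-Leibniz rule D(a·b) = a ∗_{1,0} (D b) + (D a)·b. -/
open Finset

/-- The Ward product of coefficient sequences. -/
noncomputable def wardMul (ψ : ℕ → ℂ) (a b : ℕ → ℂ) (n : ℕ) : ℂ :=
  ∑ k ∈ Finset.range (n + 1), psiBinom ψ n k * a k * b (n - k)

/-- The ψ-derivative on coefficient sequences: the shift (D a)ₙ = a_{n+1}. -/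
def Dpsi (a : ℕ → ℂ) (n : ℕ) : ℂ := a (n + 1)


/-!
Multiplying by `ψₙ₊₁` turns both products on the right into sums against `binomψ(n+1, k)`:
by the ψ-absorption identities `ψₙ₊₁ binomψ(n, k) = ψₖ₊₁ binomψ(n+1, k+1)` and
`ψₙ₊₁ F(n+1, k) binomψ(n, k) = (ψₙ₊₁ - ψₖ) binomψ(n+1, k)`, the Ward term carries the weight `ψₖ`
and the Fontané term the weight `ψₙ₊₁ - ψₖ`, which add up to `ψₙ₊₁`.
-/

lemma psiFact_succ (ψ : ℕ → ℂ) (n : ℕ) : psiFact ψ (n + 1) = psiFact ψ n * ψ (n + 1) := rfl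

lemma psi_succ_mul_psiBinom (ψ : ℕ → ℂ) {n k : ℕ} (hk : ψ (k + 1) ≠ 0) :
    ψ (n + 1) * psiBinom ψ n k = ψ (k + 1) * psiBinom ψ (n + 1) (k + 1) := by
  simp only [psiBinom, psiFact_succ, Nat.add_sub_add_right]
  field_simp

lemma Fker_mul_psiBinom_mul_psi (ψ : ℕ → ℂ) {n k : ℕ} (hk : k ≤ n + 1) :
    Fker ψ (n + 1) k * psiBinom ψ n k * ψ (n + 1) = (ψ (n + 1) - ψ k) * psiBinom ψ (n + 1) k := by
  obtain rfl | hkn := eq_or_lt_of_le hk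
  · simp [Fker]
  rw [Fker, psiBinom, psiBinom, show n + 1 - k = n - k + 1 by omega, psiFact_succ, psiFact_succ]
  ring

lemma psi_mul_wardMul_Dpsi (ψ : ℕ → ℂ) (hψ0 : ψ 0 = 0) (hψ : ∀ n : ℕ, 1 ≤ n → ψ n ≠ 0)
    (a b : ℕ → ℂ) (n : ℕ) :
    ψ (n + 1) * wardMul ψ (Dpsi a) b n
      = ∑ k ∈ range (n + 2), ψ k * psiBinom ψ (n + 1) k * a k * b (n + 1 - k) := by
  rw [sum_range_succ', hψ0, wardMul, mul_sum]
  simp only [zero_mul, add_zero, Nat.add_sub_add_right, Dpsi]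
  refine sum_congr rfl fun k _ => ?_
  rw [← psi_succ_mul_psiBinom ψ (hψ (k + 1) (Nat.le_add_left 1 k))]
  ring

lemma psi_mul_fontane_Dpsi (ψ : ℕ → ℂ) (a b : ℕ → ℂ) (n : ℕ) :
    ψ (n + 1) * fontane ψ 1 0 a (Dpsi b) n
      = ∑ k ∈ range (n + 2), (ψ (n + 1) - ψ k) * psiBinom ψ (n + 1) k * a k * b (n + 1 - k) := by
  rw [sum_range_succ, sub_self, fontane, mul_sum]
  simp only [zero_mul, add_zero, Dpsi]
  refine sum_congr rfl fun k hk => ?_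
  have hkn : k < n + 1 := mem_range.mp hk
  rw [← Fker_mul_psiBinom_mul_psi ψ hkn.le, show n - k + 1 = n + 1 - k by omega]
  ring

theorem Dpsi_wardMul_general (ψ : ℕ → ℂ) (hψ0 : ψ 0 = 0) (hψ : ∀ n : ℕ, 1 ≤ n → ψ n ≠ 0)
    (a b : ℕ → ℂ) (n : ℕ) :
    Dpsi (wardMul ψ a b) n
      = fontane ψ 1 0 a (Dpsi b) n + wardMul ψ (Dpsi a) b n := by
  refine mul_left_cancel₀ (hψ (n + 1) (Nat.le_add_left 1 n)) ?_
  rw [mul_add, psi_mul_fontane_Dpsi, psi_mul_wardMul_Dpsi ψ hψ0 hψ, ← sum_add_distrib, Dpsi,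
    wardMul, mul_sum]
  refine sum_congr rfl fun k _ => ?_
  ring

/-- The ψ-Leibniz rule: D(a·b) = a ∗_{1,0} (D b) + (D a)·b. -/
theorem Dpsi_wardMul (ψ : ℕ → ℂ) (hψ0 : ψ 0 = 0) (hψ1 : ψ 1 = 1) (hψ : ∀ n : ℕ, 1 ≤ n → ψ n ≠ 0)
    (a b : ℕ → ℂ) (n : ℕ) :
    Dpsi (wardMul ψ a b) n
      = fontane ψ 1 0 a (Dpsi b) n + wardMul ψ (Dpsi a) b n :=
  Dpsi_wardMul_general ψ hψ0 hψ a b n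
end

section
/- For all n ≥ 1 and all m ≥ l ≥ 0, the binomial-operator kernel at (n,1) satisfies C(n,1)(m,l) = Σ_{i=0}^{n−1} F(m+i+1, l+i), i.e., ⟨n 1⟩∗ = ⊞_{i=0}^{n−1} ∗_{i+1,i}. -/
open Finset

/-- The binomial-operator kernels C(n,k)(m,l) of the binomial operators ⟨n k⟩∗. -/
noncomputable def Cker (ψ : ℕ → ℂ) : ℕ → ℕ → ℕ → ℕ → ℂ
  | _, 0, _, _ => 1
  | 0, _ + 1, _, _ => 0
  | n + 1, k + 1, m, l =>
      if k = n then ∏ i ∈ Finset.range (n + 1), Fker ψ (m + i + 1) l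
      else Cker ψ n (k + 1) (m + 1) (l + 1) + Fker ψ (m + 1) l * Cker ψ n k (m + 1) l

theorem Cker_zero_right (ψ : ℕ → ℂ) (n m l : ℕ) : Cker ψ n 0 m l = 1 := by
  cases n <;> rfl

theorem Cker_one_one (ψ : ℕ → ℂ) (m l : ℕ) : Cker ψ 1 1 m l = Fker ψ (m + 1) l := by
  simp [Cker]

theorem Cker_succ_one (ψ : ℕ → ℂ) {n : ℕ} (hn : 1 ≤ n) (m l : ℕ) :
    Cker ψ (n + 1) 1 m l = Cker ψ n 1 (m + 1) (l + 1) + Fker ψ (m + 1) l := by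
  rw [Cker, if_neg (by omega), Cker_zero_right, mul_one]

theorem Cker_n_one_general (ψ : ℕ → ℂ)
    (n : ℕ) (hn : 1 ≤ n) (m l : ℕ) :
    Cker ψ n 1 m l = ∑ i ∈ Finset.range n, Fker ψ (m + i + 1) (l + i) := by
  induction n, hn using Nat.le_induction generalizing m l with
  | base => simp [Cker_one_one]
  | succ n hn ih =>
    rw [Cker_succ_one ψ hn, ih, Finset.sum_range_succ']
    refine congrArg₂ (· + ·) (Finset.sum_congr rfl fun i _ => ?_) (by simp)
    congr 1 <;> omega

/-- ⟨n 1⟩∗ = ⊞_{i=0}^{n−1} ∗_{i+1,i}: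
C(n,1)(m,l) = Σ_{i=0}^{n−1} F(m+i+1, l+i). -/
theorem Cker_n_one (ψ : ℕ → ℂ) (hψ0 : ψ 0 = 0) (hψ1 : ψ 1 = 1) (hψ : ∀ n : ℕ, 1 ≤ n → ψ n ≠ 0)
    (n : ℕ) (hn : 1 ≤ n) (m l : ℕ) (hlm : l ≤ m) :
    Cker ψ n 1 m l = ∑ i ∈ Finset.range n, Fker ψ (m + i + 1) (l + i) :=
  Cker_n_one_general ψ n hn m l
end
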